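/- arXiv:1603.08082 — 2 statements merged into one kernel-verified Lean document; each statement's English description precedes it below -/
import Mathlib

section
/- Let X be an infinite-dimensional Banach space, let U be a nonempty relatively weakly open subset of the closed unit ball B_X, and let a ∈ U with ‖a‖ < 1. Then a can be written as a = (1−μ)y + μz where μ ∈ [0,1] and y, z are points of U lying on the unit sphere S_X. -/
/-
Weak neighbourhoods only see finitely many functionals, so in infinite dimension
the basic neighbourhood of `a` contains the whole line `a + ℝ v` (intersected with
the ball) for some `v ≠ 0` in their common kernel. Since `‖a‖ < 1`, this line
leaves the unit ball on both sides of `a`, crossing the sphere at points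
`y = a + s v` and `z = a + t v` with `s < 0 < t`, and `a` lies on the segment `[y, z]`.
-/

/-- `U` is a relatively weakly open subset of the closed unit ball of `X`:
it is contained in the ball and around each of its points it contains a basic
relatively weak neighbourhood determined by finitely many functionals. -/
def RelWeakOpen {X : Type*} [NormedAddCommGroup X] [NormedSpace ℝ X] (U : Set X) : Prop :=
  U ⊆ Metric.closedBall 0 1 ∧
    ∀ a ∈ U, ∃ (m : ℕ) (f : Fin m → (X →L[ℝ] ℝ)) (δ : ℝ), 0 < δ ∧
      ∀ b ∈ Metric.closedBall (0 : X) 1, (∀ j, |f j b - f j a| < δ) → b ∈ U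

theorem exists_ne_zero_forall_eq_zero_of_not_finiteDimensional {K V ι : Type*} [Field K]
    [AddCommGroup V] [Module K V] [Finite ι] (hV : ¬ FiniteDimensional K V)
    (f : ι → V →ₗ[K] K) : ∃ v ≠ 0, ∀ i, f i v = 0 := by
  by_contra! h
  refine hV (FiniteDimensional.of_injective (LinearMap.pi f) ?_)
  rw [← LinearMap.ker_eq_bot, LinearMap.ker_eq_bot']
  intro v hv
  by_contra hv0
  obtain ⟨i, hi⟩ := h v hv0
  exact hi (congrFun hv i)

theorem mem_segment_add_smul {𝕜 E : Type*} [Field 𝕜] [LinearOrder 𝕜] [IsStrictOrderedRing 𝕜]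
    [AddCommGroup E] [Module 𝕜 E] (a v : E) {s t : 𝕜} (hs : s ≤ 0) (ht : 0 ≤ t) :
    a ∈ segment 𝕜 (a + s • v) (a + t • v) := by
  have h0 : (0 : 𝕜) ∈ segment 𝕜 s t := by
    rw [segment_eq_Icc (hs.trans ht)]
    exact ⟨hs, ht⟩
  have := image_segment 𝕜 (AffineMap.lineMap a (a + v)) s t ▸ Set.mem_image_of_mem _ h0
  simpa [AffineMap.lineMap_apply_module', add_comm] using this

theorem exists_pos_norm_add_smul_eq {E : Type*} [NormedAddCommGroup E] [NormedSpace ℝ E]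
    {a v : E} {r : ℝ} (ha : ‖a‖ < r) (hv : v ≠ 0) : ∃ t : ℝ, 0 < t ∧ ‖a + t • v‖ = r := by
  have hv' : 0 < ‖v‖ := norm_pos_iff.mpr hv
  set T := (r + ‖a‖) / ‖v‖
  have hT : 0 ≤ T := div_nonneg (by linarith [norm_nonneg a]) hv'.le
  have hrT : r ≤ ‖a + T • v‖ := by
    have hTv : ‖T • v‖ = r + ‖a‖ := by
      rw [norm_smul, Real.norm_of_nonneg hT, div_mul_cancel₀ _ hv'.ne']
    have htri := norm_sub_le (a + T • v) a
    rw [add_sub_cancel_left] at htri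
    linarith
  have hcont : Continuous fun t : ℝ => ‖a + t • v‖ := by fun_prop
  obtain ⟨t, htT, hteq⟩ := intermediate_value_Icc hT hcont.continuousOn
    ⟨by simpa using ha.le, hrT⟩
  refine ⟨t, htT.1.lt_of_ne ?_, hteq⟩
  rintro rfl
  simp only [zero_smul, add_zero] at hteq
  exact ha.ne hteq

theorem exists_neg_pos_norm_add_smul_eq {E : Type*} [NormedAddCommGroup E] [NormedSpace ℝ E]
    {a v : E} {r : ℝ} (ha : ‖a‖ < r) (hv : v ≠ 0) :
    ∃ s t : ℝ, s < 0 ∧ 0 < t ∧ ‖a + s • v‖ = r ∧ ‖a + t • v‖ = r := by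
  obtain ⟨s, hs, hseq⟩ := exists_pos_norm_add_smul_eq ha (neg_ne_zero.mpr hv)
  obtain ⟨t, ht, hteq⟩ := exists_pos_norm_add_smul_eq ha hv
  exact ⟨-s, t, neg_neg_of_pos hs, ht, by rwa [neg_smul, ← smul_neg], hteq⟩

theorem stmt0_general {X : Type*} [NormedAddCommGroup X] [NormedSpace ℝ X]
    (hX : ¬ FiniteDimensional ℝ X) (U : Set X) (hU : RelWeakOpen U)
    (a : X) (haU : a ∈ U) (ha : ‖a‖ < 1) :
    ∃ (μ : ℝ) (y z : X), μ ∈ Set.Icc (0 : ℝ) 1 ∧ y ∈ U ∧ z ∈ U ∧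
      ‖y‖ = 1 ∧ ‖z‖ = 1 ∧ a = (1 - μ) • y + μ • z := by
  obtain ⟨m, f, δ, hδ, hmem⟩ := hU.2 a haU
  obtain ⟨v, hv, hfv⟩ :=
    exists_ne_zero_forall_eq_zero_of_not_finiteDimensional hX fun j ↦ (f j : X →ₗ[ℝ] ℝ)
  have hline (r : ℝ) (hr : ‖a + r • v‖ = 1) : a + r • v ∈ U :=
    hmem _ (by simp [hr]) fun j ↦ by
      simp [show f j v = 0 from hfv j, hδ]
  obtain ⟨s, t, hs, ht, hys, hzt⟩ := exists_neg_pos_norm_add_smul_eq ha hv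
  obtain ⟨α, β, hα, hβ, hαβ, hab⟩ := mem_segment_add_smul a v hs.le ht.le
  refine ⟨β, a + s • v, a + t • v, ⟨hβ, by linarith⟩, hline s hys, hline t hzt, hys, hzt, ?_⟩
  rw [← hαβ, add_sub_cancel_right]
  exact hab.symm

/-- In an infinite-dimensional Banach space, every point `a` of norm `< 1` of a
relatively weakly open subset `U` of the closed unit ball is a convex combination
`a = (1-μ)y + μz` of two points `y, z ∈ U` lying on the unit sphere. -/
theorem stmt0 {X : Type*} [NormedAddCommGroup X] [NormedSpace ℝ X] [CompleteSpace X]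
    (hX : ¬ FiniteDimensional ℝ X) (U : Set X) (hU : RelWeakOpen U)
    (a : X) (haU : a ∈ U) (ha : ‖a‖ < 1) :
    ∃ (μ : ℝ) (y z : X), μ ∈ Set.Icc (0 : ℝ) 1 ∧ y ∈ U ∧ z ∈ U ∧
      ‖y‖ = 1 ∧ ‖z‖ = 1 ∧ a = (1 - μ) • y + μ • z :=
  stmt0_general hX U hU a haU ha
end

section
/- Let X and Y be Banach spaces and Z = X ⊕_1 Y their direct sum with the norm ‖(x,y)‖ = ‖x‖ + ‖y‖. Let z = (x₀, y₀) ∈ S_Z and let W be a relatively weakly open subset of B_Z containing z. Define x̂ = x₀/‖x₀‖ if x₀ ≠ 0 and x̂ = 0 otherwise, and ŷ similarly for y₀. Then there exist relatively weakly open subsets U ⊆ B_X containing x̂ and V ⊆ B_Y containing ŷ such that (‖x₀‖·U) × (‖y₀‖·V) ⊆ W. -/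
open Classical in
/-- `normalize x = x / ‖x‖` if `x ≠ 0`, and `0` otherwise. -/
noncomputable def unitize {X : Type*} [NormedAddCommGroup X] [NormedSpace ℝ X] (x : X) : X :=
  if x = 0 then 0 else ‖x‖⁻¹ • x

open Metric WithLp

section unitize

variable {X : Type*} [NormedAddCommGroup X] [NormedSpace ℝ X]

lemma norm_unitize_le_one (x : X) : ‖unitize x‖ ≤ 1 := by
  unfold unitize
  split_ifs with h
  · simp
  · rw [norm_smul, norm_inv, norm_norm, inv_mul_cancel₀ (norm_ne_zero_iff.mpr h)]

lemma unitize_mem_closedBall (x : X) : unitize x ∈ closedBall (0 : X) 1 :=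
  mem_closedBall_zero_iff.mpr (norm_unitize_le_one x)

lemma norm_smul_unitize (x : X) : ‖x‖ • unitize x = x := by
  unfold unitize
  split_ifs with h
  · simp [h]
  · rw [smul_smul, mul_inv_cancel₀ (norm_ne_zero_iff.mpr h), one_smul]

end unitize

lemma relWeakOpen_setOf_abs_sub_lt {X : Type*} [NormedAddCommGroup X] [NormedSpace ℝ X]
    {m : ℕ} (g : Fin m → X →L[ℝ] ℝ) (c : X) (ε : ℝ) :
    RelWeakOpen {u : X | u ∈ closedBall (0 : X) 1 ∧ ∀ j, |g j u - g j c| < ε} := by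
  refine ⟨fun u hu => hu.1, ?_⟩
  rintro a ⟨-, ha⟩
  have hsmall : ∀ᶠ δ in nhdsWithin (0 : ℝ) (Set.Ioi 0), ∀ j, δ < ε - |g j a - g j c| :=
    Filter.eventually_all.2 fun j =>
      nhdsWithin_le_nhds (eventually_lt_nhds (sub_pos.2 (ha j)))
  obtain ⟨δ, hδ, hδpos⟩ := (hsmall.and self_mem_nhdsWithin).exists
  refine ⟨m, g, δ, hδpos, fun b hb hba => ⟨hb, fun j => ?_⟩⟩
  calc |g j b - g j c| ≤ |g j b - g j a| + |g j a - g j c| := abs_sub_le _ _ _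
    _ < ε := by linarith [hba j, hδ j]

lemma WithLp.map_toLp_prod {p : ENNReal} {X Y M F : Type*} [AddCommGroup X] [AddCommGroup Y]
    [AddCommMonoid M] [FunLike F (WithLp p (X × Y)) M] [AddHomClass F (WithLp p (X × Y)) M]
    (φ : F) (a : X) (b : Y) :
    φ (toLp p (a, b)) = φ (toLp p (a, 0)) + φ (toLp p (0, b)) := by
  rw [← map_add, ← toLp_add, Prod.mk_add_mk, add_zero, zero_add]

lemma WithLp.norm_toLp_one_smul_smul_le {X Y : Type*} [NormedAddCommGroup X] [NormedSpace ℝ X]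
    [NormedAddCommGroup Y] [NormedSpace ℝ Y] (s t : ℝ) {u : X} {v : Y}
    (hu : ‖u‖ ≤ 1) (hv : ‖v‖ ≤ 1) : ‖toLp 1 (s • u, t • v)‖ ≤ |s| + |t| := by
  rw [prod_norm_eq_of_L1]
  simp only [toLp_fst, toLp_snd, norm_smul, Real.norm_eq_abs]
  gcongr
  · exact mul_le_of_le_one_right (abs_nonneg s) hu
  · exact mul_le_of_le_one_right (abs_nonneg t) hv

lemma RelWeakOpen.exists_smul_prod_subset {X Y : Type*} [NormedAddCommGroup X]
    [NormedSpace ℝ X] [NormedAddCommGroup Y] [NormedSpace ℝ Y] {W : Set (WithLp 1 (X × Y))}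
    (hW : RelWeakOpen W) {s t : ℝ} (hst : |s| + |t| ≤ 1) {a : X} {b : Y}
    (ha : a ∈ closedBall (0 : X) 1) (hb : b ∈ closedBall (0 : Y) 1)
    (hab : toLp 1 (s • a, t • b) ∈ W) :
    ∃ (U : Set X) (V : Set Y), RelWeakOpen U ∧ RelWeakOpen V ∧ a ∈ U ∧ b ∈ V ∧
      {w | ∃ u ∈ U, ∃ v ∈ V, w = toLp 1 (s • u, t • v)} ⊆ W := by
  obtain ⟨m, f, δ, hδ, hf⟩ := hW.2 _ hab
  let E := (prodContinuousLinearEquiv 1 ℝ X Y).symm.toContinuousLinearMap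
  let g : Fin m → X →L[ℝ] ℝ := fun j => (f j).comp (E.comp (s • .inl ℝ X Y))
  let h : Fin m → Y →L[ℝ] ℝ := fun j => (f j).comp (E.comp (t • .inr ℝ X Y))
  have hfgh : ∀ j (u : X) (v : Y), f j (toLp 1 (s • u, t • v)) = g j u + h j v := fun j u v => by
    rw [map_toLp_prod]
    simp only [g, h, E, ContinuousLinearMap.comp_apply, smul_apply,
      ContinuousLinearMap.inl_apply, ContinuousLinearMap.inr_apply, Prod.smul_mk, smul_zero,
      ContinuousLinearEquiv.coe_coe, prodContinuousLinearEquiv_symm_apply]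
  refine ⟨_, _, relWeakOpen_setOf_abs_sub_lt g a (δ / 2), relWeakOpen_setOf_abs_sub_lt h b (δ / 2),
    ⟨ha, fun _ => by simpa using half_pos hδ⟩, ⟨hb, fun _ => by simpa using half_pos hδ⟩, ?_⟩
  rintro _ ⟨u, ⟨hu, hgu⟩, v, ⟨hv, hhv⟩, rfl⟩
  refine hf _ ?_ fun j => ?_
  · exact mem_closedBall_zero_iff.2 <| (norm_toLp_one_smul_smul_le s t
      (mem_closedBall_zero_iff.1 hu) (mem_closedBall_zero_iff.1 hv)).trans hst
  · rw [hfgh, hfgh]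
    calc |g j u + h j v - (g j a + h j b)| = |(g j u - g j a) + (h j v - h j b)| := by ring_nf
      _ ≤ |g j u - g j a| + |h j v - h j b| := abs_add_le _ _
      _ < δ := by linarith [hgu j, hhv j]

theorem stmt4_general {X Y : Type*} [NormedAddCommGroup X] [NormedSpace ℝ X]
    [NormedAddCommGroup Y] [NormedSpace ℝ Y]
    (x₀ : X) (y₀ : Y) (z : WithLp 1 (X × Y))
    (hz : z = (WithLp.equiv 1 (X × Y)).symm (x₀, y₀))
    (hzS : z ∈ Metric.sphere (0 : WithLp 1 (X × Y)) 1)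
    (W : Set (WithLp 1 (X × Y))) (hW : RelWeakOpen W) (hzW : z ∈ W) :
    ∃ (U : Set X) (V : Set Y), RelWeakOpen U ∧ RelWeakOpen V ∧
      unitize x₀ ∈ U ∧ unitize y₀ ∈ V ∧
      {w : WithLp 1 (X × Y) | ∃ u ∈ U, ∃ v ∈ V,
        w = (WithLp.equiv 1 (X × Y)).symm (‖x₀‖ • u, ‖y₀‖ • v)} ⊆ W := by
  subst hz
  have hnorm : |‖x₀‖| + |‖y₀‖| ≤ 1 := by
    rw [abs_norm, abs_norm, ← mem_sphere_zero_iff_norm.1 hzS, prod_norm_eq_of_L1]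
    rfl
  rw [← norm_smul_unitize x₀, ← norm_smul_unitize y₀] at hzW
  exact hW.exists_smul_prod_subset hnorm (unitize_mem_closedBall x₀) (unitize_mem_closedBall y₀)
    hzW

/-- If `z = (x₀, y₀)` is a unit vector of `Z = X ⊕₁ Y` and `W` is a relatively weakly
open subset of `B_Z` containing `z`, then there are relatively weakly open subsets
`U ∋ x̂₀` of `B_X` and `V ∋ ŷ₀` of `B_Y` with `(‖x₀‖U) × (‖y₀‖V) ⊆ W`. -/
theorem stmt4 {X Y : Type*} [NormedAddCommGroup X] [NormedSpace ℝ X] [CompleteSpace X]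
    [NormedAddCommGroup Y] [NormedSpace ℝ Y] [CompleteSpace Y]
    (x₀ : X) (y₀ : Y) (z : WithLp 1 (X × Y))
    (hz : z = (WithLp.equiv 1 (X × Y)).symm (x₀, y₀))
    (hzS : z ∈ Metric.sphere (0 : WithLp 1 (X × Y)) 1)
    (W : Set (WithLp 1 (X × Y))) (hW : RelWeakOpen W) (hzW : z ∈ W) :
    ∃ (U : Set X) (V : Set Y), RelWeakOpen U ∧ RelWeakOpen V ∧
      unitize x₀ ∈ U ∧ unitize y₀ ∈ V ∧
      {w : WithLp 1 (X × Y) | ∃ u ∈ U, ∃ v ∈ V,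
        w = (WithLp.equiv 1 (X × Y)).symm (‖x₀‖ • u, ‖y₀‖ • v)} ⊆ W :=
  stmt4_general x₀ y₀ z hz hzS W hW hzW
end
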